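/- arXiv:1611.01416 — 2 statements merged into one kernel-verified Lean document; each statement's English description precedes it below -/
import Mathlib

section
/- For any sequence of positive integers r_1, ..., r_ℓ (ℓ ≥ 2), there exists a connected simple graph G with ∑ r_i vertices, chromatic number exactly ℓ, a proper colouring with colour classes of sizes r_1, ..., r_ℓ, and exactly (∑_{i=1}^ℓ r_i − 1) + (ℓ−1)(ℓ−2)/2 edges, containing K_ℓ as a subgraph. -/
open SimpleGraph

namespace Stmt1Aux

variable {ℓ : ℕ}

def anc (hℓ : 2 ≤ ℓ) (i : Fin ℓ) : Fin ℓ :=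
  if i.val = 0 then ⟨1, by omega⟩ else ⟨0, by omega⟩

lemma anc_ne (hℓ : 2 ≤ ℓ) (i : Fin ℓ) : anc hℓ i ≠ i := by
  unfold anc
  split <;> rename_i h0 <;> intro h <;> apply_fun Fin.val at h <;> simp at h <;> omega

variable (r : Fin ℓ → ℕ) (hr : ∀ i, 0 < r i) (hℓ : 2 ≤ ℓ)

def rep (i : Fin ℓ) : Σ j, Fin (r j) := ⟨i, ⟨0, hr i⟩⟩

lemma rep_snd (i : Fin ℓ) : ((rep r hr i).2 : ℕ) = 0 := rfl

lemma rep_inj : Function.Injective (rep r hr) := fun i j h =>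
  congrArg Sigma.fst h

lemma eq_rep {v : Σ j, Fin (r j)} (h : (v.2 : ℕ) = 0) : v = rep r hr v.1 := by
  obtain ⟨i, k⟩ := v
  exact congrArg (Sigma.mk i) (Fin.ext h)

def ancV (v : Σ j, Fin (r j)) : Σ j, Fin (r j) := rep r hr (anc hℓ v.1)

lemma ancV_snd (v : Σ j, Fin (r j)) : ((ancV r hr hℓ v).2 : ℕ) = 0 := rfl

def G0 : SimpleGraph (Σ j, Fin (r j)) where
  Adj u v :=
    ((u.2 : ℕ) = 0 ∧ (v.2 : ℕ) = 0 ∧ u.1 ≠ v.1)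
    ∨ ((u.2 : ℕ) ≠ 0 ∧ v = ancV r hr hℓ u)
    ∨ ((v.2 : ℕ) ≠ 0 ∧ u = ancV r hr hℓ v)
  symm := by
    refine ⟨?_⟩
    rintro u v (⟨h1, h2, h3⟩ | h | h)
    · exact Or.inl ⟨h2, h1, h3.symm⟩
    · exact Or.inr (Or.inr h)
    · exact Or.inr (Or.inl h)
  loopless := by
    refine ⟨?_⟩
    rintro v (⟨_, _, h⟩ | ⟨hv, h⟩ | ⟨hv, h⟩)
    · exact h rfl
    all_goals
      exact hv (congrArg (fun x : (Σ j, Fin (r j)) => (x.2 : ℕ)) h)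

lemma rep_adj {i j : Fin ℓ} (h : i ≠ j) :
    (G0 r hr hℓ).Adj (rep r hr i) (rep r hr j) := Or.inl ⟨rfl, rfl, h⟩

lemma pend_adj {v : Σ j, Fin (r j)} (h : (v.2 : ℕ) ≠ 0) :
    (G0 r hr hℓ).Adj v (ancV r hr hℓ v) := Or.inr (Or.inl ⟨h, rfl⟩)

lemma G0_connected : (G0 r hr hℓ).Connected := by
  have hi0 : (0 : ℕ) < ℓ := by omega
  have hrep : ∀ i : Fin ℓ, (G0 r hr hℓ).Reachable (rep r hr i) (rep r hr ⟨0, hi0⟩) := by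
    intro i
    by_cases h : i = ⟨0, hi0⟩
    · rw [h]
    · exact (rep_adj r hr hℓ h).reachable
  have key : ∀ v, (G0 r hr hℓ).Reachable v (rep r hr ⟨0, hi0⟩) := by
    intro v
    by_cases h : (v.2 : ℕ) = 0
    · rw [eq_rep r hr h]; exact hrep v.1
    · exact (pend_adj r hr hℓ h).reachable.trans (hrep _)
  rw [connected_iff]
  exact ⟨fun u v => (key u).trans (key v).symm, ⟨rep r hr ⟨0, hi0⟩⟩⟩

lemma G0_coloring_valid {u v : Σ j, Fin (r j)} (h : (G0 r hr hℓ).Adj u v) :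
    u.1 ≠ v.1 := by
  rcases h with ⟨_, _, h⟩ | ⟨_, h⟩ | ⟨_, h⟩
  · exact h
  · rw [h]; exact (anc_ne hℓ u.1).symm
  · rw [h]; exact anc_ne hℓ v.1

lemma edgeSet_eq :
    (G0 r hr hℓ).edgeSet =
      (Sym2.map (rep r hr) '' (⊤ : SimpleGraph (Fin ℓ)).edgeSet) ∪
      ((fun v => s(v, ancV r hr hℓ v)) '' {v | (v.2 : ℕ) ≠ 0}) := by
  ext x
  induction x using Sym2.ind with
  | _ u v =>
    constructor
    · rw [mem_edgeSet]
      rintro (⟨h1, h2, h3⟩ | ⟨h, hv⟩ | ⟨h, hu⟩)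
      · left
        refine ⟨s(u.1, v.1), ?_, ?_⟩
        · rw [mem_edgeSet]; exact h3
        · rw [Sym2.map_pair_eq, ← eq_rep r hr h1, ← eq_rep r hr h2]
      · right; exact ⟨u, h, by rw [hv]⟩
      · right; exact ⟨v, h, by rw [hu, Sym2.eq_swap]⟩
    · rintro (⟨y, hy, hm⟩ | ⟨w, hw, hm⟩) <;> rw [← hm]
      · revert hy
        induction y using Sym2.ind with
        | _ i j =>
          intro hy
          rw [mem_edgeSet, top_adj] at hy
          rw [Sym2.map_pair_eq, mem_edgeSet]
          exact rep_adj r hr hℓ hy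
      · rw [mem_edgeSet]; exact pend_adj r hr hℓ hw


include hr in
lemma zeroSet_eq : {v : Σ j, Fin (r j) | (v.2 : ℕ) = 0} = rep r hr '' Set.univ := by
  ext v
  constructor
  · intro h; exact ⟨v.1, trivial, (eq_rep r hr h).symm⟩
  · rintro ⟨i, -, rfl⟩; rfl

include hr in
lemma ncard_nonzero :
    {v : Σ j, Fin (r j) | (v.2 : ℕ) ≠ 0}.ncard = (∑ i, r i) - ℓ := by
  have h1 : {v : Σ j, Fin (r j) | (v.2 : ℕ) = 0}.ncard = ℓ := by
    rw [zeroSet_eq r hr, Set.ncard_image_of_injective _ (rep_inj r hr), Set.ncard_univ,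
      Nat.card_eq_fintype_card, Fintype.card_fin]
  have h2 := Set.ncard_add_ncard_compl {v : Σ j, Fin (r j) | (v.2 : ℕ) = 0}
  have h3 : Nat.card (Σ j, Fin (r j)) = ∑ i, r i := by
    simp [Nat.card_eq_fintype_card]
  have h4 : {v : Σ j, Fin (r j) | (v.2 : ℕ) ≠ 0} =
      {v : Σ j, Fin (r j) | (v.2 : ℕ) = 0}ᶜ := rfl
  rw [h4]
  omega

lemma ncard_edgeSet :
    (G0 r hr hℓ).edgeSet.ncard = ((∑ i, r i) - ℓ) + Nat.choose ℓ 2 := by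
  classical
  rw [edgeSet_eq]
  have hA : (Sym2.map (rep r hr) '' (⊤ : SimpleGraph (Fin ℓ)).edgeSet).ncard
      = Nat.choose ℓ 2 := by
    rw [Set.ncard_image_of_injective _ (Sym2.map.injective (rep_inj r hr)),
      ← SimpleGraph.coe_edgeFinset, Set.ncard_coe_finset,
      card_edgeFinset_top_eq_card_choose_two, Fintype.card_fin]
  have hBinj : Set.InjOn (fun v => s(v, ancV r hr hℓ v)) {v : Σ j, Fin (r j) | (v.2 : ℕ) ≠ 0} := by
    intro v hv w hw h
    simp only [Sym2.eq, Sym2.rel_iff', Prod.mk.injEq, Prod.swap_prod_mk] at h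
    rcases h with ⟨h1, -⟩ | ⟨h1, h2⟩
    · exact h1
    · exact absurd (congrArg (fun x : (Σ j, Fin (r j)) => (x.2 : ℕ)) h1) hv
  have hB : ((fun v => s(v, ancV r hr hℓ v)) '' {v : Σ j, Fin (r j) | (v.2 : ℕ) ≠ 0}).ncard
      = (∑ i, r i) - ℓ := by
    rw [Set.ncard_image_of_injOn hBinj, ncard_nonzero r hr]
  have hdisj : Disjoint (Sym2.map (rep r hr) '' (⊤ : SimpleGraph (Fin ℓ)).edgeSet)
      ((fun v => s(v, ancV r hr hℓ v)) '' {v : Σ j, Fin (r j) | (v.2 : ℕ) ≠ 0}) := by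
    rw [Set.disjoint_left]
    rintro x ⟨y, -, rfl⟩ ⟨w, hw, hm⟩
    revert hm
    induction y using Sym2.ind with
    | _ i j =>
      intro hm
      rw [Sym2.map_pair_eq] at hm
      simp only [Sym2.eq, Sym2.rel_iff', Prod.mk.injEq, Prod.swap_prod_mk] at hm
      rcases hm with ⟨h1, h2⟩ | ⟨h1, h2⟩ <;>
        first
          | exact hw (congrArg (fun x : (Σ j, Fin (r j)) => (x.2 : ℕ)) h1)
          | exact hw (congrArg (fun x : (Σ j, Fin (r j)) => (x.2 : ℕ)) h1).symm
          | exact hw (congrArg (fun x : (Σ j, Fin (r j)) => (x.2 : ℕ)) h2)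
          | exact hw (congrArg (fun x : (Σ j, Fin (r j)) => (x.2 : ℕ)) h2).symm
  rw [Set.ncard_union_eq hdisj (Set.toFinite _) (Set.toFinite _), hA, hB, Nat.add_comm]

end Stmt1Aux


open Stmt1Aux in
/-- For positive integers r_1,…,r_ℓ (ℓ ≥ 2) there is a connected graph on ∑ r_i
vertices with chromatic number exactly ℓ, a proper colouring with colour classes of
sizes r_1,…,r_ℓ, exactly (∑ r_i − 1) + (ℓ−1)(ℓ−2)/2 edges, and containing K_ℓ as a
subgraph. -/
theorem stmt_1 (ℓ : ℕ) (hℓ : 2 ≤ ℓ) (r : Fin ℓ → ℕ) (hr : ∀ i, 0 < r i) :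
    ∃ G : SimpleGraph (Fin (∑ i, r i)),
      G.Connected ∧
      G.chromaticNumber = (ℓ : ℕ∞) ∧
      (∃ c : G.Coloring (Fin ℓ), ∀ i, {v | c v = i}.ncard = r i) ∧
      G.edgeSet.ncard = ((∑ i, r i) - 1) + (ℓ - 1) * (ℓ - 2) / 2 ∧
      (∃ f : Fin ℓ ↪ Fin (∑ i, r i), ∀ i j, i ≠ j → G.Adj (f i) (f j)) := by
  classical
  set n := ∑ i, r i with hn
  have hcard : Fintype.card (Σ j, Fin (r j)) = n := by simp [hn]
  let e : (Σ j, Fin (r j)) ≃ Fin n := Fintype.equivFinOfCardEq hcard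
  let G : SimpleGraph (Fin n) :=
    { Adj := fun u v => (G0 r hr hℓ).Adj (e.symm u) (e.symm v)
      symm := ⟨fun u v h => (G0 r hr hℓ).adj_symm h⟩
      loopless := ⟨fun v h => (G0 r hr hℓ).irrefl h⟩ }
  have hAdj : ∀ u v, G.Adj u v ↔ (G0 r hr hℓ).Adj (e.symm u) (e.symm v) :=
    fun _ _ => Iff.rfl
  have iso : G0 r hr hℓ ≃g G := ⟨e, by intro a b; simp [hAdj]⟩
  have hnℓ : ℓ ≤ n := by
    calc ℓ = ∑ _i : Fin ℓ, 1 := by simp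
    _ ≤ n := Finset.sum_le_sum (fun i _ => hr i)
  -- coloring
  let c : G.Coloring (Fin ℓ) := Coloring.mk (fun v => (e.symm v).1)
    (fun {u v} h => G0_coloring_valid r hr hℓ ((hAdj u v).mp h))
  -- clique embedding
  have hfinj : Function.Injective (fun i => e (rep r hr i)) :=
    e.injective.comp (rep_inj r hr)
  have hfadj : ∀ i j : Fin ℓ, i ≠ j → G.Adj (e (rep r hr i)) (e (rep r hr j)) := by
    intro i j hij
    rw [hAdj, Equiv.symm_apply_apply, Equiv.symm_apply_apply]
    exact rep_adj r hr hℓ hij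
  refine ⟨G, ?_, ?_, ⟨c, ?_⟩, ?_, ⟨⟨fun i => e (rep r hr i), hfinj⟩, hfadj⟩⟩
  · exact iso.connected_iff.mp (G0_connected r hr hℓ)
  · -- chromatic number
    refine le_antisymm ?_ ?_
    · simpa using c.colorable.chromaticNumber_le
    · have hclique : G.IsClique (Finset.univ.image (fun i => e (rep r hr i))) := by
        intro u hu v hv huv
        simp only [Finset.coe_image, Finset.coe_univ, Set.image_univ, Set.mem_range] at hu hv
        obtain ⟨i, rfl⟩ := hu
        obtain ⟨j, rfl⟩ := hv
        exact hfadj i j (fun h => huv (by rw [h]))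
      have := hclique.card_le_chromaticNumber
      rwa [Finset.card_image_of_injective _ hfinj, Finset.card_univ, Fintype.card_fin] at this
  · -- colour classes
    intro i
    have hset : {v | c v = i} = e '' {w : Σ j, Fin (r j) | w.1 = i} := by
      ext v
      rw [Set.mem_image_equiv]
      rfl
    have hfib : {w : Σ j, Fin (r j) | w.1 = i} = Sigma.mk i '' Set.univ := by
      ext ⟨j, k⟩
      constructor
      · rintro rfl; exact ⟨k, trivial, rfl⟩
      · rintro ⟨k', -, hk⟩
        exact (congrArg Sigma.fst hk).symm
    rw [hset, Set.ncard_image_of_injective _ e.injective, hfib,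
      Set.ncard_image_of_injective _ sigma_mk_injective, Set.ncard_univ,
      Nat.card_eq_fintype_card, Fintype.card_fin]
  · -- edge count
    have hes : G.edgeSet = Sym2.map e '' (G0 r hr hℓ).edgeSet := by
      ext x
      induction x using Sym2.ind with
      | _ u v =>
        rw [mem_edgeSet, hAdj]
        constructor
        · intro h
          exact ⟨s(e.symm u, e.symm v), by rwa [mem_edgeSet],
            by rw [Sym2.map_pair_eq, Equiv.apply_symm_apply, Equiv.apply_symm_apply]⟩
        · rintro ⟨y, hy, hm⟩
          revert hy hm
          induction y using Sym2.ind with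
          | _ a b =>
            intro hy hm
            rw [Sym2.map_pair_eq] at hm
            rw [mem_edgeSet] at hy
            simp only [Sym2.eq, Sym2.rel_iff', Prod.mk.injEq, Prod.swap_prod_mk] at hm
            rcases hm with ⟨rfl, rfl⟩ | ⟨rfl, rfl⟩ <;>
              simp only [Equiv.symm_apply_apply]
            · exact hy
            · exact hy.symm
    have hcount : G.edgeSet.ncard = (n - ℓ) + Nat.choose ℓ 2 := by
      rw [hes, Set.ncard_image_of_injective _ (Sym2.map.injective e.injective)]
      exact ncard_edgeSet r hr hℓ
    rw [hcount]
    obtain ⟨m, rfl⟩ : ∃ m, ℓ = m + 2 := ⟨ℓ - 2, by omega⟩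
    have h1 : (m + 2).choose 2 = (m + 1) + (m + 1).choose 2 := by
      rw [Nat.choose_succ_succ]
      simp [Nat.choose_one_right]
    have h2 : (m + 2 - 1) * (m + 2 - 2) / 2 = (m + 1).choose 2 := by
      rw [Nat.choose_two_right]
      congr 1
    rw [h1, h2]
    omega
end

section
/- Let ℓ ≥ 2 and r_1, ..., r_ℓ be positive integers. In the Type-I tree G₁ with colouring c(v_{i,j}) = i, the third chromatic Zagreb index equals (r_1 − 1) + ∑_{i=2}^ℓ r_i·(i − 1). -/
/-- Vertices v_{i,j}, 1 ≤ i ≤ ℓ, 1 ≤ j ≤ r_i, encoded as ⟨i,j⟩ : (i : Fin ℓ) × Fin (r (i+1)). -/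
def ClusterVert (ℓ : ℕ) (r : ℕ → ℕ) : Type := (i : Fin ℓ) × Fin (r (i.val + 1))

instance (ℓ : ℕ) (r : ℕ → ℕ) : Fintype (ClusterVert ℓ r) :=
  inferInstanceAs (Fintype ((i : Fin ℓ) × Fin (r (i.val + 1))))

instance (ℓ : ℕ) (r : ℕ → ℕ) : DecidableEq (ClusterVert ℓ r) :=
  inferInstanceAs (DecidableEq ((i : Fin ℓ) × Fin (r (i.val + 1))))

/-- Type-I edges: v_{1,1}v_{j,k} for 2 ≤ j ≤ ℓ, and v_{1,i}v_{2,1} for 2 ≤ i ≤ r_1. -/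
def typeIRel (ℓ : ℕ) (r : ℕ → ℕ) (a b : ClusterVert ℓ r) : Prop :=
  (a.1.val = 0 ∧ a.2.val = 0 ∧ b.1.val ≠ 0) ∨
  (a.1.val = 0 ∧ a.2.val ≠ 0 ∧ b.1.val = 1 ∧ b.2.val = 0)

instance (ℓ : ℕ) (r : ℕ → ℕ) : DecidableRel (typeIRel ℓ r) := fun a b => by
  unfold typeIRel; infer_instance

/-- The Type-I graphical embodiment G₁. -/
def typeIGraph (ℓ : ℕ) (r : ℕ → ℕ) : SimpleGraph (ClusterVert ℓ r) :=
  SimpleGraph.fromRel (typeIRel ℓ r)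

instance (ℓ : ℕ) (r : ℕ → ℕ) : DecidableRel (typeIGraph ℓ r).Adj := fun a b =>
  decidable_of_iff _ (SimpleGraph.fromRel_adj (typeIRel ℓ r) a b).symm

/-! Orient each edge of `G₁` by `typeIRel`, away from `v_{1,1}` or into `v_{2,1}`; the sum over
ordered adjacent pairs counts every oriented edge twice. The root `v_{1,1}` is joined to each of
the `r_i` vertices of cluster `i ≥ 2` with colour gap `i - 1`, and each of the `r_1 - 1` other
vertices of cluster `1` is joined to `v_{2,1}` with gap `1`. -/

open Finset

namespace SimpleGraph

variable {V : Type*}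

theorem fromRel_adj_iff_of_asymm {R : V → V → Prop} (hR : ∀ a b, R a b → ¬ R b a) (u v : V) :
    (fromRel R).Adj u v ↔ R u v ∨ R v u := by
  refine ⟨And.right, fun h => ⟨?_, h⟩⟩
  rintro rfl
  exact h.elim (fun h' => hR u u h' h') fun h' => hR u u h' h'

theorem sum_ite_adj_eq_two_nsmul [Fintype V] {M : Type*} [AddCommMonoid M] (G : SimpleGraph V)
    [DecidableRel G.Adj] {R : V → V → Prop} [DecidableRel R] (hG : ∀ u v, G.Adj u v ↔ R u v ∨ R v u)
    (hR : ∀ a b, R a b → ¬ R b a) (f : V → V → M) (hf : ∀ u v, f u v = f v u) :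
    ∑ u, ∑ v, (if G.Adj u v then f u v else 0) = 2 • ∑ u, ∑ v, if R u v then f u v else 0 := by
  have hsplit : ∀ u v, (if G.Adj u v then f u v else 0) =
      (if R u v then f u v else 0) + (if R v u then f v u else 0) := by
    intro u v
    by_cases huv : R u v
    · simp [hG, huv, hR u v huv]
    · by_cases hvu : R v u <;> simp [hG, huv, hvu, hf u v]
  simp_rw [hsplit, sum_add_distrib]
  rw [sum_comm (f := fun u v => if R v u then f v u else 0), two_nsmul]

end SimpleGraph

theorem Fin.sum_boole_val_ne_zero (n : ℕ) :
    ∑ j : Fin n, (if j.val ≠ 0 then 1 else 0) = n - 1 := by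
  cases n with
  | zero => rfl
  | succ n => simp [Fin.sum_univ_succ]

theorem Finset.sum_range_mul_eq_sum_Icc (r : ℕ → ℕ) (ℓ : ℕ) :
    ∑ i ∈ range ℓ, r (i + 1) * i = ∑ i ∈ Icc 2 ℓ, r i * (i - 1) := by
  rcases Nat.eq_zero_or_pos ℓ with rfl | hℓ
  · simp
  rw [range_eq_Ico, sum_eq_sum_Ico_succ_bot hℓ, mul_zero, zero_add, ← Ico_add_one_right_eq_Icc,
    ← sum_Ico_add' (fun i => r i * (i - 1)) 1 ℓ 1]
  simp

namespace ClusterVert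

variable {ℓ : ℕ} {r : ℕ → ℕ}

theorem sum_eq_sum_sigma {M : Type*} [AddCommMonoid M] (f : ClusterVert ℓ r → M) :
    ∑ u, f u = ∑ i : Fin ℓ, ∑ j : Fin (r (i + 1)), f ⟨i, j⟩ :=
  Fintype.sum_sigma f

theorem eq_mk_iff (u : ClusterVert ℓ r) {i j : ℕ} (hi : i < ℓ) (hj : j < r (i + 1)) :
    u = ⟨⟨i, hi⟩, ⟨j, hj⟩⟩ ↔ u.1.val = i ∧ u.2.val = j := by
  obtain ⟨⟨a, ha⟩, ⟨b, hb⟩⟩ := u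
  constructor
  · rintro ⟨⟩; exact ⟨rfl, rfl⟩
  · rintro ⟨rfl, rfl⟩; rfl

theorem sum_fst_val : ∑ u : ClusterVert ℓ r, u.1.val = ∑ i ∈ Icc 2 ℓ, r i * (i - 1) := by
  simp only [sum_eq_sum_sigma, sum_const, card_univ, Fintype.card_fin, smul_eq_mul]
  rw [Fin.sum_univ_eq_sum_range (fun i => r (i + 1) * i), sum_range_mul_eq_sum_Icc]

theorem sum_boole_fst_eq_zero_snd_ne_zero (h0 : 0 < ℓ) :
    ∑ u : ClusterVert ℓ r, (if u.1.val = 0 ∧ u.2.val ≠ 0 then 1 else 0) = r 1 - 1 := by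
  rw [sum_eq_sum_sigma, sum_eq_single ⟨0, h0⟩]
  · simpa using Fin.sum_boole_val_ne_zero (r 1)
  · intro i _ hi
    simp [Fin.val_ne_iff.mpr hi]
  · simp

end ClusterVert

section TypeI

variable {ℓ : ℕ} {r : ℕ → ℕ}

theorem typeIRel_asymm {a b : ClusterVert ℓ r} (h : typeIRel ℓ r a b) : ¬ typeIRel ℓ r b a := by
  unfold typeIRel at *
  omega

-- `v_{1,1}` and `v_{2,1}`
def typeIRoot (hℓ : 0 < ℓ) (hr1 : 0 < r 1) : ClusterVert ℓ r := ⟨⟨0, hℓ⟩, ⟨0, hr1⟩⟩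

def typeIHub (hℓ : 1 < ℓ) (hr2 : 0 < r 2) : ClusterVert ℓ r := ⟨⟨1, hℓ⟩, ⟨0, hr2⟩⟩

/-- The gap of `v_{1,1} → v` is written as `c(v) - 1` for every `v`: it vanishes on the root's own
cluster, which the root is not joined to. -/
theorem typeIRel_weight (hℓ : 1 < ℓ) (hr1 : 0 < r 1) (hr2 : 0 < r 2) (u v : ClusterVert ℓ r) :
    (if typeIRel ℓ r u v then ((u.1.val : ℤ) + 1 - ((v.1.val : ℤ) + 1)).natAbs else 0) =
      (if u = typeIRoot (by omega) hr1 then v.1.val else 0) +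
        (if v = typeIHub hℓ hr2 then (if u.1.val = 0 ∧ u.2.val ≠ 0 then 1 else 0) else 0) := by
  simp only [typeIRoot, typeIHub, ClusterVert.eq_mk_iff]
  split_ifs <;> unfold typeIRel at * <;> omega

end TypeI

/-- In the Type-I tree with colouring c(v_{i,j}) = i, the third chromatic Zagreb index
∑_{uv∈E} |c(u)−c(v)| (computed as half of the sum over ordered adjacent pairs) equals
(r_1 − 1) + ∑_{i=2}^ℓ r_i·(i−1). -/
theorem stmt_13 (ℓ : ℕ) (hℓ : 2 ≤ ℓ) (r : ℕ → ℕ) (hr : ∀ i ∈ Finset.Icc 1 ℓ, 0 < r i) :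
    (∑ u : ClusterVert ℓ r, ∑ v : ClusterVert ℓ r,
        if (typeIGraph ℓ r).Adj u v then
          ((u.1.val : ℤ) + 1 - ((v.1.val : ℤ) + 1)).natAbs else 0) =
      2 * ((r 1 - 1) + ∑ i ∈ Finset.Icc 2 ℓ, r i * (i - 1)) := by
  have hr1 : 0 < r 1 := hr 1 (mem_Icc.mpr ⟨le_rfl, by omega⟩)
  have hr2 : 0 < r 2 := hr 2 (mem_Icc.mpr ⟨by omega, hℓ⟩)
  rw [(typeIGraph ℓ r).sum_ite_adj_eq_two_nsmul
    (SimpleGraph.fromRel_adj_iff_of_asymm fun _ _ => typeIRel_asymm) (fun _ _ => typeIRel_asymm)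
    _ (fun _ _ => by omega), smul_eq_mul]
  rw [sum_congr rfl fun u _ => sum_congr rfl fun v _ => typeIRel_weight hℓ hr1 hr2 u v]
  simp only [sum_add_distrib, ← ite_sum_zero, sum_ite_eq', mem_univ, if_true]
  rw [ClusterVert.sum_fst_val, ClusterVert.sum_boole_fst_eq_zero_snd_ne_zero (by omega), add_comm]
end
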